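/- The number of bicolored Motzkin paths of length n in which no denim horizontal step occurs before the first down step equals the Catalan number C(n). -/
import Mathlib


inductive BStep : Type
  | U | D | Hu | Hd
deriving DecidableEq

def BStep.h : BStep → ℤ
  | .U => 1
  | .D => -1
  | .Hu => 0
  | .Hd => 0

/-- The height reached by a path (list of steps). -/
def hsum (p : List BStep) : ℤ := (p.map BStep.h).sum

/-- The path never goes below the x-axis. -/
def NonNegPath (p : List BStep) : Prop := ∀ k : ℕ, 0 ≤ hsum (p.take k)

/-- Restriction (1): no umber horizontal step occurs at height zero. -/
def Res1 (p : List BStep) : Prop :=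
  ∀ (i : ℕ) (hi : i < p.length), p.get ⟨i, hi⟩ = BStep.Hu → 0 < hsum (p.take i)

/-- Restriction (2): no denim horizontal step occurs before the first down step. -/
def Res2 (p : List BStep) : Prop :=
  ∀ (i : ℕ) (hi : i < p.length), p.get ⟨i, hi⟩ = BStep.Hd →
    ∃ (j : ℕ) (hj : j < p.length), j < i ∧ p.get ⟨j, hj⟩ = BStep.D

/-- A bicolored Motzkin path of length `n`: from (0,0) to (n,0), never below the x-axis. -/
def IsBMotzkin (n : ℕ) (p : List BStep) : Prop :=
  p.length = n ∧ hsum p = 0 ∧ NonNegPath p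

open List

@[simp] lemma hsum_nil : hsum [] = 0 := rfl
@[simp] lemma hsum_cons (s : BStep) (t : List BStep) : hsum (s :: t) = s.h + hsum t := by
  simp [hsum]
@[simp] lemma hsum_append (l m : List BStep) : hsum (l ++ m) = hsum l + hsum m := by
  simp [hsum]

lemma h_neg_one : ∀ s : BStep, s.h = -1 → s = BStep.D := by
  intro s; cases s <;> simp [BStep.h]
lemma h_ge : ∀ s : BStep, -1 ≤ s.h := by
  intro s; cases s <;> simp [BStep.h]

lemma hsum_take_succ (p : List BStep) (i : ℕ) (hi : i < p.length) :
    hsum (p.take (i+1)) = hsum (p.take i) + (p.get ⟨i, hi⟩).h := by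
  have h1 : p.take (i+1) = p.take i ++ [p[i]] := by
    rw [List.take_succ, List.getElem?_eq_getElem hi, Option.toList_some]
  rw [h1, hsum_append, List.get_eq_getElem]
  simp

lemma nonneg_cons_iff (s : BStep) (hs : s.h = 0) (t : List BStep) :
    NonNegPath (s :: t) ↔ NonNegPath t := by
  constructor
  · intro H k; have := H (k+1); simpa [hs] using this
  · intro H k
    cases k with
    | zero => simp
    | succ k => simpa [hs] using H k

lemma res2_iff (p : List BStep) : Res2 p ↔
    ∀ (i : ℕ) (hi : i < p.length), p[i] = BStep.Hd →
      ∃ (j : ℕ) (hj : j < p.length), j < i ∧ p[j] = BStep.D := by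
  simp only [Res2, List.get_eq_getElem]

lemma res2_cons_Hu {t : List BStep} : Res2 (BStep.Hu :: t) ↔ Res2 t := by
  rw [res2_iff, res2_iff]
  constructor
  · intro H i hi h
    obtain ⟨j, hj, hji, hD⟩ := H (i+1) (by simpa using Nat.succ_lt_succ hi) (by simpa using h)
    match j, hj, hD with
    | 0, _, hD => simp at hD
    | (j+1), hj, hD =>
      exact ⟨j, by simpa using Nat.lt_of_succ_lt_succ hj, Nat.lt_of_succ_lt_succ hji,
        by simpa using hD⟩
  · intro H i hi h
    match i, hi, h with
    | 0, _, h => simp at h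
    | (i+1), hi, h =>
      obtain ⟨j, hj, hji, hD⟩ := H i (by simpa using Nat.lt_of_succ_lt_succ hi) (by simpa using h)
      exact ⟨j+1, by simpa using Nat.succ_lt_succ hj, Nat.succ_lt_succ hji, by simpa using hD⟩

lemma not_res2_cons_Hd (t : List BStep) : ¬ Res2 (BStep.Hd :: t) := by
  intro H
  obtain ⟨j, hj, hji, -⟩ := (res2_iff _).mp H 0 (Nat.succ_pos _) rfl
  omega

lemma not_nonneg_cons_D (t : List BStep) : ¬ NonNegPath (BStep.D :: t) := by
  intro H
  have := H 1
  simp [BStep.h] at this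

lemma hsum_take_comp₁ (q r : List BStep) {k : ℕ} (hk : k ≤ q.length) :
    hsum ((q ++ BStep.D :: r).take k) = hsum (q.take k) := by
  rw [List.take_append, Nat.sub_eq_zero_of_le hk]
  simp

lemma hsum_take_comp₂ (q r : List BStep) {k : ℕ} (hk : q.length < k) :
    hsum ((q ++ BStep.D :: r).take k) = hsum q - 1 + hsum (r.take (k - q.length - 1)) := by
  rw [List.take_append, List.take_of_length_le (by omega)]
  obtain ⟨m, hm⟩ : ∃ m, k - q.length = m + 1 := ⟨k - q.length - 1, by omega⟩
  rw [hm]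
  have : m = k - q.length - 1 := by omega
  simp [BStep.h, this]
  ring

lemma hsum_compose {q r : List BStep} (hq0 : hsum q = 0) (hr0 : hsum r = 0) :
    hsum (BStep.U :: q ++ BStep.D :: r) = 0 := by
  simp [BStep.h, hq0, hr0]

lemma nonneg_compose {q r : List BStep} (hq0 : hsum q = 0) (hqn : NonNegPath q)
    (hrn : NonNegPath r) : NonNegPath (BStep.U :: q ++ BStep.D :: r) := by
  intro k
  cases k with
  | zero => simp
  | succ k =>
    rw [List.cons_append, List.take_succ_cons, hsum_cons]
    rcases le_or_gt k q.length with h | h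
    · rw [hsum_take_comp₁ _ _ h]
      have := hqn k
      simp only [BStep.h]
      omega
    · rw [hsum_take_comp₂ _ _ h, hq0]
      have := hrn (k - q.length - 1)
      simp only [BStep.h]
      omega

lemma getElem_comp_mid (q r : List BStep) {h} :
    (q ++ BStep.D :: r)[q.length]'h = BStep.D := by
  rw [List.getElem_append_right (le_refl q.length)]
  simp

lemma gE_left (q r : List BStep) {i : ℕ} (h : i < q.length) {hb} :
    (BStep.U :: (q ++ BStep.D :: r))[i+1]'hb = q[i] := by
  simp only [List.getElem_cons_succ]
  exact List.getElem_append_left h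

lemma gE_mid (q r : List BStep) {hb} :
    (BStep.U :: (q ++ BStep.D :: r))[q.length+1]'hb = BStep.D := by
  simp only [List.getElem_cons_succ]
  exact getElem_comp_mid q r

lemma res2_compose {q r : List BStep} :
    Res2 (BStep.U :: q ++ BStep.D :: r) ↔ Res2 q := by
  rw [res2_iff, res2_iff]
  have hlen : (BStep.U :: q ++ BStep.D :: r).length = q.length + r.length + 2 := by
    simp; omega
  constructor
  · intro H i hi h
    obtain ⟨j, hj, hji, hD⟩ := H (i+1) (by rw [hlen]; omega) ((gE_left q r hi).trans h)
    match j, hj, hji, hD with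
    | 0, _, _, hD => simp at hD
    | (j+1), hj, hji, hD =>
      have hjq : j < q.length := by omega
      exact ⟨j, hjq, by omega, (gE_left q r hjq).symm.trans hD⟩
  · intro H i hi h
    match i, hi, h with
    | 0, _, h => simp at h
    | (i+1), hi, h =>
      rcases lt_trichotomy i q.length with hiq | hiq | hiq
      · obtain ⟨j, hj, hji, hD⟩ := H i hiq ((gE_left q r hiq).symm.trans h)
        exact ⟨j+1, by rw [hlen]; omega, by omega, (gE_left q r hj).trans hD⟩
      · subst hiq
        exact absurd ((gE_mid q r).symm.trans h) (by simp)
      · refine ⟨q.length + 1, by rw [hlen]; omega, by omega, gE_mid q r⟩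

lemma exists_decomp {t : List BStep} (h0 : hsum (BStep.U :: t) = 0)
    (hn : NonNegPath (BStep.U :: t)) :
    ∃ q r, t = q ++ BStep.D :: r ∧ hsum q = 0 ∧ NonNegPath q ∧ hsum r = 0 ∧ NonNegPath r := by
  classical
  have ht : t ≠ [] := by
    rintro rfl
    simp [BStep.h] at h0
  have htl : 1 ≤ t.length := by
    cases t
    · exact absurd rfl ht
    · simp
  have hex : ∃ k, hsum ((BStep.U :: t).take (k + 2)) = 0 := by
    refine ⟨t.length - 1, ?_⟩
    have h2 : t.length - 1 + 2 = (BStep.U :: t).length := by simp; omega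
    rw [h2, List.take_length]
    exact h0
  set k := Nat.find hex with hk
  have hk0 : hsum ((BStep.U :: t).take (k+2)) = 0 := Nat.find_spec hex
  have hkmin : ∀ m, m < k → hsum ((BStep.U :: t).take (m+2)) ≠ 0 :=
    fun m hm => Nat.find_min hex hm
  have hpos : ∀ j, 1 ≤ j → j ≤ k+1 → 1 ≤ hsum ((BStep.U :: t).take j) := by
    intro j h1 h2
    match j, h1 with
    | 1, _ => simp [BStep.h]
    | (m+2), _ =>
      have hne := hkmin m (by omega)
      have := hn (m+2)
      omega
  have hklen : k + 2 ≤ t.length + 1 := by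
    by_contra hh
    push_neg at hh
    have h3 : (BStep.U :: t).take (k+1) = BStep.U :: t := List.take_of_length_le (by simp; omega)
    have h1 := hpos (k+1) (by omega) le_rfl
    rw [h3] at h1
    omega
  have hkt : k < t.length := by omega
  have htake1 : ∀ m : ℕ, (BStep.U :: t).take (m+1) = BStep.U :: t.take m := by
    intro m
    rw [List.take_succ_cons]
  have hlt : k + 1 < (BStep.U :: t).length := by simp; omega
  have hstep : hsum ((BStep.U :: t).take (k+2)) =
      hsum ((BStep.U :: t).take (k+1)) + ((BStep.U :: t).get ⟨k+1, hlt⟩).h :=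
    hsum_take_succ _ (k+1) hlt
  have hDh : ((BStep.U :: t).get ⟨k+1, hlt⟩).h = -1 := by
    have h1 := hpos (k+1) (by omega) le_rfl
    have h2 := h_ge ((BStep.U :: t).get ⟨k+1, hlt⟩)
    omega
  have htk1 : hsum ((BStep.U :: t).take (k+1)) = 1 := by omega
  have htk1' : hsum (t.take k) = 0 := by
    rw [htake1 k] at htk1
    simp [BStep.h] at htk1
    exact htk1
  have htget : t[k] = BStep.D := by
    have h5 : (BStep.U :: t).get ⟨k+1, hlt⟩ = t[k] := by
      simp [List.get_eq_getElem]
    exact h_neg_one _ (h5 ▸ hDh)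
  have hsplit : t = t.take k ++ BStep.D :: t.drop (k+1) := by
    conv_lhs => rw [← List.take_append_drop k t]
    rw [List.drop_eq_getElem_cons hkt, htget]
  refine ⟨t.take k, t.drop (k+1), hsplit, htk1', ?_, ?_, ?_⟩
  · intro j
    rcases le_or_gt k j with h | h
    · rw [List.take_take, Nat.min_eq_right h, htk1']
    · rw [List.take_take, Nat.min_eq_left (le_of_lt h)]
      have h5 := hpos (j+1) (by omega) (by omega)
      rw [htake1 j] at h5
      simp [BStep.h] at h5
      omega
  · have h6 : hsum t = hsum (t.take k) + (-1) + hsum (t.drop (k+1)) := by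
      conv_lhs => rw [hsplit]
      simp [BStep.h]
      ring
    have h8 : hsum (BStep.U :: t) = 1 + hsum t := by simp [BStep.h]
    omega
  · intro j
    have h9 := hn (k + 2 + j)
    have h10 : (BStep.U :: t).take (k+2+j) =
        BStep.U :: (t.take k ++ BStep.D :: (t.drop (k+1)).take j) := by
      rw [show k + 2 + j = (k+1+j) + 1 by omega, htake1]
      congr 1
      conv_lhs => rw [hsplit]
      rw [List.take_append]
      have hl1 : (t.take k).length = k := by rw [List.length_take]; omega
      rw [List.take_of_length_le (by omega), hl1,
        show k + 1 + j - k = j + 1 by omega, List.take_succ_cons]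
    rw [h10] at h9
    simp [BStep.h, htk1'] at h9
    exact h9

lemma decomp_aux {q r q' r' : List BStep}
    (h : q ++ BStep.D :: r = q' ++ BStep.D :: r')
    (hq0 : hsum q = 0) (hq'n : NonNegPath q') : ¬ q.length < q'.length := by
  intro hlt
  have h1 : (q ++ BStep.D :: r).take (q.length+1) = q ++ [BStep.D] := by
    rw [List.take_append, List.take_of_length_le (by omega),
      show q.length + 1 - q.length = 1 by omega]
    rfl
  have h2 : (q' ++ BStep.D :: r').take (q.length+1) =
      q'.take (q.length + 1) := by
    rw [List.take_append, Nat.sub_eq_zero_of_le (by omega)]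
    simp
  have h3 := hq'n (q.length + 1)
  rw [← h2, ← h, h1] at h3
  simp [BStep.h, hq0] at h3

lemma decomp_unique {q r q' r' : List BStep}
    (h : q ++ BStep.D :: r = q' ++ BStep.D :: r')
    (hq0 : hsum q = 0) (hq'0 : hsum q' = 0)
    (hqn : NonNegPath q) (hq'n : NonNegPath q') : q = q' ∧ r = r' := by
  have hlen : q.length = q'.length := by
    have n1 := decomp_aux h hq0 hq'n
    have n2 := decomp_aux h.symm hq'0 hqn
    omega
  obtain ⟨h1, h2⟩ := List.append_inj h hlen
  exact ⟨h1, by injection h2⟩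

instance : Fintype BStep :=
  ⟨⟨{BStep.U, BStep.D, BStep.Hu, BStep.Hd}, by decide⟩, fun x => by cases x <;> decide⟩

lemma finite_of_len (n : ℕ) (P : List BStep → Prop) (hP : ∀ p, P p → p.length = n) :
    Finite {p : List BStep // P p} := by
  apply Finite.of_injective (β := List.Vector BStep n) (fun x => ⟨x.1, hP _ x.2⟩)
  intro a b hab
  have h2 := congrArg Subtype.val hab
  exact Subtype.ext h2


instance instFinBM (n : ℕ) : Finite {p : List BStep // IsBMotzkin n p} :=
  finite_of_len n _ (fun _ h => h.1)

instance instFinR2 (n : ℕ) : Finite {p : List BStep // IsBMotzkin n p ∧ Res2 p} :=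
  finite_of_len n _ (fun _ h => h.1.1)

lemma isBM_nil : IsBMotzkin 0 [] := ⟨rfl, rfl, fun k => by simp⟩

lemma res2_nil : Res2 [] := by
  intro i hi
  simp at hi

lemma isBM_zero {p : List BStep} (h : IsBMotzkin 0 p) : p = [] :=
  List.length_eq_zero_iff.mp h.1

lemma isBM_cons_flat {n : ℕ} {t : List BStep} {s : BStep} (hs : s.h = 0) :
    IsBMotzkin (n+1) (s :: t) ↔ IsBMotzkin n t := by
  unfold IsBMotzkin
  rw [nonneg_cons_iff s hs]
  simp [hs]

abbrev BMT (n : ℕ) := {p : List BStep // IsBMotzkin n p}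
abbrev R2T (n : ℕ) := {p : List BStep // IsBMotzkin n p ∧ Res2 p}

lemma isBM_compose {n : ℕ} {i : Fin n} {q r : List BStep}
    (hq : IsBMotzkin i q) (hr : IsBMotzkin (n - 1 - i) r) :
    IsBMotzkin (n + 1) (BStep.U :: q ++ BStep.D :: r) := by
  refine ⟨?_, hsum_compose hq.2.1 hr.2.1, nonneg_compose hq.2.1 hq.2.2 hr.2.2⟩
  have h1 := hq.1
  have h2 := hr.1
  have h3 := i.isLt
  simp only [List.cons_append, List.length_cons, List.length_append]
  omega

def g2 (n : ℕ) :
    (R2T n ⊕ Σ i : Fin n, R2T i × BMT (n - 1 - i)) → R2T (n+1)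
  | Sum.inl ⟨t, ht⟩ =>
    ⟨BStep.Hu :: t, (isBM_cons_flat (s := BStep.Hu) rfl).mpr ht.1, res2_cons_Hu.mpr ht.2⟩
  | Sum.inr ⟨i, ⟨q, hq⟩, ⟨r, hr⟩⟩ =>
    ⟨BStep.U :: q ++ BStep.D :: r, isBM_compose hq.1 hr, res2_compose.mpr hq.2⟩

def g1 (n : ℕ) :
    ((BMT n ⊕ BMT n) ⊕ Σ i : Fin n, BMT i × BMT (n - 1 - i)) → BMT (n+1)
  | Sum.inl (Sum.inl ⟨t, ht⟩) => ⟨BStep.Hu :: t, (isBM_cons_flat (s := BStep.Hu) rfl).mpr ht⟩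
  | Sum.inl (Sum.inr ⟨t, ht⟩) => ⟨BStep.Hd :: t, (isBM_cons_flat (s := BStep.Hd) rfl).mpr ht⟩
  | Sum.inr ⟨i, ⟨q, hq⟩, ⟨r, hr⟩⟩ =>
    ⟨BStep.U :: q ++ BStep.D :: r, isBM_compose hq hr⟩

lemma g2_inj (n : ℕ) : Function.Injective (g2 n) := by
  rintro (⟨t, ht⟩ | ⟨i, ⟨q, hq⟩, ⟨r, hr⟩⟩) (⟨t', ht'⟩ | ⟨i', ⟨q', hq'⟩, ⟨r', hr'⟩⟩) hab <;>
      have hval : _ = _ := congrArg Subtype.val hab <;>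
      simp only [g2] at hval
  · obtain rfl : t = t' := by injection hval
    rfl
  · exact absurd hval (by simp)
  · exact absurd hval (by simp)
  · have htail : q ++ BStep.D :: r = q' ++ BStep.D :: r' := by injection hval
    obtain ⟨rfl, rfl⟩ := decomp_unique htail hq.1.2.1 hq'.1.2.1 hq.1.2.2 hq'.1.2.2
    obtain rfl : i = i' := Fin.ext (by rw [← hq.1.1, ← hq'.1.1])
    rfl

lemma g1_inj (n : ℕ) : Function.Injective (g1 n) := by
  rintro ((⟨t, ht⟩ | ⟨t, ht⟩) | ⟨i, ⟨q, hq⟩, ⟨r, hr⟩⟩)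
    ((⟨t', ht'⟩ | ⟨t', ht'⟩) | ⟨i', ⟨q', hq'⟩, ⟨r', hr'⟩⟩) hab <;>
      have hval : _ = _ := congrArg Subtype.val hab <;>
      simp only [g1] at hval
  · obtain rfl : t = t' := by injection hval
    rfl
  · exact absurd hval (by simp)
  · exact absurd hval (by simp)
  · exact absurd hval (by simp)
  · obtain rfl : t = t' := by injection hval
    rfl
  · exact absurd hval (by simp)
  · exact absurd hval (by simp)
  · exact absurd hval (by simp)
  · have htail : q ++ BStep.D :: r = q' ++ BStep.D :: r' := by injection hval
    obtain ⟨rfl, rfl⟩ := decomp_unique htail hq.2.1 hq'.2.1 hq.2.2 hq'.2.2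
    obtain rfl : i = i' := Fin.ext (by rw [← hq.1, ← hq'.1])
    rfl

lemma g2_surj (n : ℕ) : Function.Surjective (g2 n) := by
  rintro ⟨p, hp, hr2⟩
  cases p with
  | nil => exact absurd hp.1 (by simp)
  | cons s t =>
    cases s with
    | U =>
      obtain ⟨q, r, hsplit, hq0, hqn, hr0, hrn⟩ := exists_decomp hp.2.1 hp.2.2
      have hlen : t.length = n := by
        have := hp.1
        simpa using this
      have hql : q.length < n := by
        rw [hsplit] at hlen
        simp at hlen
        omega
      have hrl : r.length = n - 1 - q.length := by
        rw [hsplit] at hlen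
        simp at hlen
        omega
      have hres2q : Res2 q := by
        rw [hsplit] at hr2
        exact res2_compose.mp hr2
      refine ⟨Sum.inr ⟨⟨q.length, hql⟩, ⟨q, ⟨⟨rfl, hq0, hqn⟩, hres2q⟩⟩,
        ⟨r, ⟨hrl, hr0, hrn⟩⟩⟩, ?_⟩
      apply Subtype.ext
      simp only [g2]
      rw [hsplit]
      rfl
    | D => exact absurd hp.2.2 (not_nonneg_cons_D t)
    | Hu =>
      refine ⟨Sum.inl ⟨t, (isBM_cons_flat (s := BStep.Hu) rfl).mp hp, res2_cons_Hu.mp hr2⟩, ?_⟩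
      apply Subtype.ext
      simp only [g2]
    | Hd => exact absurd hr2 (not_res2_cons_Hd t)

lemma g1_surj (n : ℕ) : Function.Surjective (g1 n) := by
  rintro ⟨p, hp⟩
  cases p with
  | nil => exact absurd hp.1 (by simp)
  | cons s t =>
    cases s with
    | U =>
      obtain ⟨q, r, hsplit, hq0, hqn, hr0, hrn⟩ := exists_decomp hp.2.1 hp.2.2
      have hlen : t.length = n := by
        have := hp.1
        simpa using this
      have hql : q.length < n := by
        rw [hsplit] at hlen
        simp at hlen
        omega
      have hrl : r.length = n - 1 - q.length := by
        rw [hsplit] at hlen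
        simp at hlen
        omega
      refine ⟨Sum.inr ⟨⟨q.length, hql⟩, ⟨q, ⟨rfl, hq0, hqn⟩⟩, ⟨r, ⟨hrl, hr0, hrn⟩⟩⟩, ?_⟩
      apply Subtype.ext
      simp only [g1]
      rw [hsplit]
      rfl
    | D => exact absurd hp.2.2 (not_nonneg_cons_D t)
    | Hu =>
      refine ⟨Sum.inl (Sum.inl ⟨t, (isBM_cons_flat (s := BStep.Hu) rfl).mp hp⟩), ?_⟩
      apply Subtype.ext
      simp only [g1]
    | Hd =>
      refine ⟨Sum.inl (Sum.inr ⟨t, (isBM_cons_flat (s := BStep.Hd) rfl).mp hp⟩), ?_⟩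
      apply Subtype.ext
      simp only [g1]

lemma card_R2_succ (n : ℕ) :
    Nat.card (R2T (n+1)) =
      Nat.card (R2T n) + ∑ i : Fin n, Nat.card (R2T i) * Nat.card (BMT (n-1-i)) := by
  classical
  letI : ∀ m : ℕ, Fintype (BMT m) := fun m => Fintype.ofFinite _
  letI : ∀ m : ℕ, Fintype (R2T m) := fun m => Fintype.ofFinite _
  rw [← Nat.card_congr (Equiv.ofBijective _ ⟨g2_inj n, g2_surj n⟩)]
  simp only [Nat.card_eq_fintype_card, Fintype.card_sum, Fintype.card_sigma, Fintype.card_prod]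

lemma card_BM_succ (n : ℕ) :
    Nat.card (BMT (n+1)) =
      Nat.card (BMT n) + Nat.card (BMT n)
        + ∑ i : Fin n, Nat.card (BMT i) * Nat.card (BMT (n-1-i)) := by
  classical
  letI : ∀ m : ℕ, Fintype (BMT m) := fun m => Fintype.ofFinite _
  rw [← Nat.card_congr (Equiv.ofBijective _ ⟨g1_inj n, g1_surj n⟩)]
  simp only [Nat.card_eq_fintype_card, Fintype.card_sum, Fintype.card_sigma, Fintype.card_prod]

lemma card_BM_zero : Nat.card (BMT 0) = 1 := by
  have : Unique (BMT 0) :=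
    ⟨⟨⟨[], isBM_nil⟩⟩, by rintro ⟨p, hp⟩; exact Subtype.ext (isBM_zero hp)⟩
  exact Nat.card_unique

lemma card_R2_zero : Nat.card (R2T 0) = 1 := by
  have : Unique (R2T 0) :=
    ⟨⟨⟨[], isBM_nil, res2_nil⟩⟩, by rintro ⟨p, hp⟩; exact Subtype.ext (isBM_zero hp.1)⟩
  exact Nat.card_unique

lemma catalan_identity (m : ℕ) :
    catalan (m+2) = catalan (m+1) + catalan (m+1)
      + ∑ i : Fin m, catalan (i+1) * catalan (m - i) := by
  rw [catalan_succ (m+1),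
    Fin.sum_univ_eq_sum_range (fun i => catalan i * catalan (m+1-i)) (m+2),
    Finset.sum_range_succ, Finset.sum_range_succ',
    Fin.sum_univ_eq_sum_range (fun i => catalan (i+1) * catalan (m - i)) m]
  simp only [catalan_zero, Nat.succ_sub_succ, mul_one, one_mul, Nat.sub_self, Nat.sub_zero]
  omega

lemma catalan_identity2 (m : ℕ) :
    catalan (m+1) = catalan m + ∑ i : Fin m, catalan i * catalan (m - i) := by
  rw [catalan_succ m,
    Fin.sum_univ_eq_sum_range (fun i => catalan i * catalan (m-i)) (m+1),
    Finset.sum_range_succ,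
    Fin.sum_univ_eq_sum_range (fun i => catalan i * catalan (m - i)) m]
  simp only [catalan_zero, Nat.sub_self, mul_one]
  omega

lemma card_BM_eq (n : ℕ) : Nat.card (BMT n) = catalan (n+1) := by
  induction n using Nat.strong_induction_on with
  | _ n ih =>
    match n with
    | 0 => rw [card_BM_zero, catalan_one]
    | (m+1) =>
      rw [card_BM_succ m, ih m (by omega)]
      have hs : ∑ i : Fin m, Nat.card (BMT i) * Nat.card (BMT (m-1-i))
          = ∑ i : Fin m, catalan (i+1) * catalan (m - i) := by
        apply Finset.sum_congr rfl
        intro i _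
        have hi := i.isLt
        rw [ih i (by omega), ih (m-1-i) (by omega)]
        congr 2
        omega
      rw [hs]
      exact (catalan_identity m).symm

lemma card_R2_eq (n : ℕ) : Nat.card (R2T n) = catalan n := by
  induction n using Nat.strong_induction_on with
  | _ n ih =>
    match n with
    | 0 => rw [card_R2_zero, catalan_zero]
    | (m+1) =>
      rw [card_R2_succ m, ih m (by omega)]
      have hs : ∑ i : Fin m, Nat.card (R2T i) * Nat.card (BMT (m-1-i))
          = ∑ i : Fin m, catalan i * catalan (m - i) := by
        apply Finset.sum_congr rfl
        intro i _
        have hi := i.isLt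
        rw [ih i (by omega), card_BM_eq (m-1-i)]
        congr 2
        omega
      rw [hs]
      exact (catalan_identity2 m).symm

theorem bicolored_motzkin_res2_count (n : ℕ) :
    Nat.card {p : List BStep // IsBMotzkin n p ∧ Res2 p} = catalan n := card_R2_eq n
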